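/- Let h : [0,∞) → [0,∞) be monotonically decreasing with h(s) → 1 as s → ∞, h ≥ 1, and h(s) ≤ C s^μ near 0 with μ > −1. Then the normalized double integral (1/λ(Z(2L,δ))^2) ∫_{Z(2L,δ)×Z(2L,δ)} h(|x−y|) dx dy converges to 1 as L → ∞, uniformly in δ > 0. -/

import Mathlib

open MeasureTheory Filter Topology

/-- The cylinder `Z(2L,δ) = {x ∈ ℝ^d : x_1 ∈ [−L,L], |(0,x_2,…,x_d)| ≤ δ}`. -/
def Cylinder (d : ℕ) [NeZero d] (L δ : ℝ) : Set (EuclideanSpace ℝ (Fin d)) :=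
  {x | x 0 ∈ Set.Icc (-L) L ∧
    Real.sqrt (∑ i ∈ Finset.univ.erase (0 : Fin d), (x i) ^ 2) ≤ δ}

/-!
Write `Z = Z(2L,δ) ≅ [-L,L] × B_δ`. As `h` is decreasing, `1 ≤ h ≤ h 0` on `[0,∞)`, and
`h ≤ 1 + ε/2` beyond some distance `M`. The pairs `(x, y) ∈ Z × Z` with `|x₁ - y₁| ≤ M` have,
by Fubini, measure at most `2M |B_δ| |Z| = (M/L) |Z|²`. Hence the normalised double integral lies
between `1` and `1 + ε/2 + (h 0 - 1) M / L`, whatever `δ` is.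
-/

open scoped ENNReal

section

variable {α β : Type*} [MeasurableSpace α] [MeasurableSpace β]

theorem setIntegral_le_add_mul_measureReal_inter {ν : Measure α} {W S : Set α} {f : α → ℝ}
    {c B : ℝ} (hW : MeasurableSet W) (hWfin : ν W ≠ ∞) (hS : MeasurableSet S)
    (hf : IntegrableOn f W ν) (hfS : ∀ p ∈ W, f p ≤ c + B) (hfc : ∀ p ∈ W, p ∉ S → f p ≤ c) :
    ∫ p in W, f p ∂ν ≤ c * ν.real W + B * ν.real (W ∩ S) := by
  have hind : IntegrableOn (S.indicator fun _ => B) W ν :=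
    (integrableOn_const hWfin).indicator hS
  calc ∫ p in W, f p ∂ν ≤ ∫ p in W, (c + S.indicator (fun _ => B) p) ∂ν := by
        refine setIntegral_mono_on hf ((integrableOn_const hWfin).add hind) hW fun p hp => ?_
        by_cases hpS : p ∈ S
        · simpa [hpS] using hfS p hp
        · simpa [hpS] using hfc p hp hpS
    _ = c * ν.real W + B * ν.real (W ∩ S) := by
        rw [integral_add (integrableOn_const hWfin).integrable hind.integrable, setIntegral_const,
          integral_indicator_const _ hS, measureReal_restrict_apply hS, Set.inter_comm,
          smul_eq_mul, smul_eq_mul, mul_comm, mul_comm B]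

theorem MeasureTheory.Measure.prod_le_mul_of_slice_le {μ : Measure α} {ν : Measure β} [SFinite ν]
    {s : Set (α × β)} {Z : Set α} {m : ℝ≥0∞} (hs : MeasurableSet s)
    (hsZ : s ⊆ Prod.fst ⁻¹' Z) (hm : ∀ x ∈ Z, ν (Prod.mk x ⁻¹' s) ≤ m) :
    μ.prod ν s ≤ m * μ Z := by
  have hsupp : (fun x => ν (Prod.mk x ⁻¹' s)).support ⊆ Z := fun x hx => by
    by_contra hxZ
    exact hx (measure_mono_null (fun y hy => hxZ (hsZ hy)) measure_empty)
  rw [Measure.prod_apply hs, ← setLIntegral_eq_of_support_subset hsupp, ← setLIntegral_const]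
  exact setLIntegral_mono measurable_const hm

end

section PairIntegral

variable {E : Type*} [NormedAddCommGroup E] [MeasurableSpace E] {μ : Measure E} [SFinite μ]
  {Z : Set E} {f : ℝ → ℝ}

theorem measurable_comp_norm_of_antitoneOn [BorelSpace E] (hf : AntitoneOn f (Set.Ici 0)) :
    Measurable fun x : E => f ‖x‖ := by
  have hmax : Antitone fun s : ℝ => f (max s 0) := fun s t hst =>
    hf (le_max_right s 0) (le_max_right t 0) (max_le_max hst le_rfl)
  simpa [Function.comp_def] using
    hmax.measurable.comp (measurable_norm : Measurable fun x : E => ‖x‖)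

theorem integrableOn_prod_comp_norm_sub [BorelSpace E] [SecondCountableTopology E]
    (hZ : μ Z ≠ ∞) (hf : AntitoneOn f (Set.Ici 0)) (hf0 : ∀ s, 0 ≤ s → 0 ≤ f s) :
    IntegrableOn (fun p : E × E => f ‖p.1 - p.2‖) (Z ×ˢ Z) (μ.prod μ) := by
  refine Measure.integrableOn_of_bounded (M := f 0) ?_
    ((measurable_comp_norm_of_antitoneOn hf).comp
      (measurable_fst.sub measurable_snd)).aestronglyMeasurable
    (Eventually.of_forall fun p => ?_)
  · rw [Measure.prod_prod]
    exact ENNReal.mul_ne_top hZ hZ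
  · rw [Real.norm_of_nonneg (hf0 _ (norm_nonneg _))]
    exact hf Set.self_mem_Ici (Set.mem_Ici.mpr (norm_nonneg _)) (norm_nonneg _)

theorem measureReal_sq_le_setIntegral_prod (hZ : MeasurableSet Z) (hZfin : μ Z ≠ ∞)
    (hf1 : ∀ s, 0 ≤ s → 1 ≤ f s)
    (hint : IntegrableOn (fun p : E × E => f ‖p.1 - p.2‖) (Z ×ˢ Z) (μ.prod μ)) :
    μ.real Z ^ 2 ≤ ∫ p in Z ×ˢ Z, f ‖p.1 - p.2‖ ∂(μ.prod μ) := by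
  have := setIntegral_ge_of_const_le_real (hZ.prod hZ)
    (by rw [Measure.prod_prod]; exact ENNReal.mul_ne_top hZfin hZfin)
    (fun p _ => hf1 _ (norm_nonneg _)) hint
  rwa [one_mul, measureReal_prod_prod, ← sq] at this

end PairIntegral

namespace EuclideanSpace

noncomputable def headTailEquiv (n : ℕ) :
    EuclideanSpace ℝ (Fin (n + 1)) ≃ᵐ ℝ × EuclideanSpace ℝ (Fin n) :=
  (MeasurableEquiv.toLp 2 _).symm.trans <|
    (MeasurableEquiv.piFinSuccAbove (fun _ => ℝ) 0).trans <|
      MeasurableEquiv.prodCongr (MeasurableEquiv.refl ℝ) (MeasurableEquiv.toLp 2 _)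

variable {n : ℕ}

theorem headTailEquiv_apply (x : EuclideanSpace ℝ (Fin (n + 1))) :
    headTailEquiv n x = (x 0, WithLp.toLp 2 fun j => x j.succ) := rfl

theorem measurePreserving_headTailEquiv : MeasurePreserving (headTailEquiv n) :=
  (PiLp.volume_preserving_ofLp _).trans <|
    (measurePreserving_piFinSuccAbove (fun _ => volume) 0).trans <|
      (MeasurePreserving.id volume).prod (PiLp.volume_preserving_toLp _)

theorem volume_preimage_headTailEquiv_prod {s : Set ℝ} {t : Set (EuclideanSpace ℝ (Fin n))}
    (hs : MeasurableSet s) (ht : MeasurableSet t) :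
    volume (headTailEquiv n ⁻¹' s ×ˢ t) = volume s * volume t := by
  rw [measurePreserving_headTailEquiv.measure_preimage (hs.prod ht).nullMeasurableSet,
    Measure.volume_eq_prod, Measure.prod_prod]

theorem volume_preimage_headTailEquiv_Icc_prod_closedBall (a b δ : ℝ) :
    volume (headTailEquiv n ⁻¹' Set.Icc a b ×ˢ Metric.closedBall 0 δ) =
      ENNReal.ofReal (b - a) * volume (Metric.closedBall (0 : EuclideanSpace ℝ (Fin n)) δ) := by
  rw [volume_preimage_headTailEquiv_prod measurableSet_Icc measurableSet_closedBall,
    Real.volume_Icc]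

end EuclideanSpace

def coordNearDiagonal {ι : Type*} (i : ι) (M : ℝ) :
    Set (EuclideanSpace ℝ ι × EuclideanSpace ℝ ι) :=
  {p | |p.1 i - p.2 i| ≤ M}

theorem measurableSet_coordNearDiagonal {ι : Type*} [Fintype ι] (i : ι) (M : ℝ) :
    MeasurableSet (coordNearDiagonal i M) :=
  measurableSet_le (by fun_prop) measurable_const

theorem lt_norm_sub_of_notMem_coordNearDiagonal {ι : Type*} [Fintype ι] {i : ι} {M : ℝ}
    {p : EuclideanSpace ℝ ι × EuclideanSpace ℝ ι} (hp : p ∉ coordNearDiagonal i M) :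
    M < ‖p.1 - p.2‖ :=
  (not_le.mp hp).trans_le (PiLp.norm_apply_le (p.1 - p.2) i)

open EuclideanSpace

section Cylinder

variable {n : ℕ} {L δ : ℝ}

theorem cylinder_eq_preimage (n : ℕ) (L δ : ℝ) :
    Cylinder (n + 1) L δ = headTailEquiv n ⁻¹' Set.Icc (-L) L ×ˢ Metric.closedBall 0 δ := by
  ext x
  simp only [Cylinder, Set.mem_ofPred_eq, Set.mem_preimage, headTailEquiv_apply, Set.mem_prod,
    mem_closedBall_zero_iff, EuclideanSpace.norm_eq, Real.norm_eq_abs, sq_abs]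
  rw [Fin.univ_succ, Finset.erase_cons, Finset.sum_map]
  rfl

theorem measurableSet_cylinder (n : ℕ) (L δ : ℝ) : MeasurableSet (Cylinder (n + 1) L δ) := by
  rw [cylinder_eq_preimage]
  exact (headTailEquiv n).measurable (measurableSet_Icc.prod measurableSet_closedBall)

theorem volume_cylinder (n : ℕ) (L δ : ℝ) :
    volume (Cylinder (n + 1) L δ) =
      ENNReal.ofReal (2 * L) * volume (Metric.closedBall (0 : EuclideanSpace ℝ (Fin n)) δ) := by
  rw [cylinder_eq_preimage, volume_preimage_headTailEquiv_Icc_prod_closedBall]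
  ring_nf

theorem volume_cylinder_ne_top (n : ℕ) (L δ : ℝ) : volume (Cylinder (n + 1) L δ) ≠ ∞ := by
  rw [volume_cylinder]
  exact ENNReal.mul_ne_top ENNReal.ofReal_ne_top measure_closedBall_lt_top.ne

theorem volume_real_cylinder (hL : 0 ≤ L) :
    volume.real (Cylinder (n + 1) L δ) =
      2 * L * volume.real (Metric.closedBall (0 : EuclideanSpace ℝ (Fin n)) δ) := by
  rw [measureReal_def, volume_cylinder, ENNReal.toReal_mul, ENNReal.toReal_ofReal (by linarith),
    measureReal_def]

theorem volume_real_cylinder_pos (hL : 0 < L) (hδ : 0 < δ) :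
    0 < volume.real (Cylinder (n + 1) L δ) := by
  rw [volume_real_cylinder hL.le]
  exact mul_pos (by linarith) (ENNReal.toReal_pos (Metric.measure_closedBall_pos _ _ hδ).ne'
    measure_closedBall_lt_top.ne)

theorem volume_cylinder_sq_inter_coordNearDiagonal_le (M : ℝ) :
    (volume.prod volume)
        (Cylinder (n + 1) L δ ×ˢ Cylinder (n + 1) L δ ∩ coordNearDiagonal 0 M) ≤
      ENNReal.ofReal (2 * M) * volume (Metric.closedBall (0 : EuclideanSpace ℝ (Fin n)) δ) *
        volume (Cylinder (n + 1) L δ) := by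
  refine Measure.prod_le_mul_of_slice_le
    (((measurableSet_cylinder n L δ).prod (measurableSet_cylinder n L δ)).inter
      (measurableSet_coordNearDiagonal 0 M)) (fun p hp => hp.1.1) fun x _ => ?_
  calc _ ≤ volume (headTailEquiv n ⁻¹' Set.Icc (x 0 - M) (x 0 + M) ×ˢ Metric.closedBall 0 δ) := by
        refine measure_mono ?_
        rintro y ⟨⟨-, hy⟩, hxy⟩
        rw [cylinder_eq_preimage] at hy
        simp only [coordNearDiagonal, Set.mem_preimage, Set.mem_prod, headTailEquiv_apply,
          Set.mem_Icc, Set.mem_ofPred_eq, abs_le] at hy hxy ⊢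
        exact ⟨⟨by linarith, by linarith⟩, hy.2⟩
    _ = ENNReal.ofReal (2 * M) * volume (Metric.closedBall (0 : EuclideanSpace ℝ (Fin n)) δ) := by
        rw [volume_preimage_headTailEquiv_Icc_prod_closedBall]
        ring_nf

theorem measureReal_cylinder_sq_inter_coordNearDiagonal_le {M : ℝ} (hL : 0 < L) (hM : 0 ≤ M) :
    (volume.prod volume).real
        (Cylinder (n + 1) L δ ×ˢ Cylinder (n + 1) L δ ∩ coordNearDiagonal 0 M) ≤
      M / L * volume.real (Cylinder (n + 1) L δ) ^ 2 := by
  have hle := ENNReal.toReal_mono (ENNReal.mul_ne_top (ENNReal.mul_ne_top ENNReal.ofReal_ne_top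
    measure_closedBall_lt_top.ne) (volume_cylinder_ne_top n L δ))
    (volume_cylinder_sq_inter_coordNearDiagonal_le M)
  rw [ENNReal.toReal_mul, ENNReal.toReal_mul, ENNReal.toReal_ofReal (by linarith)] at hle
  calc _ ≤ 2 * M * volume.real (Metric.closedBall (0 : EuclideanSpace ℝ (Fin n)) δ) *
        volume.real (Cylinder (n + 1) L δ) := hle
    _ = M / L * volume.real (Cylinder (n + 1) L δ) ^ 2 := by
        rw [volume_real_cylinder hL.le]
        field_simp

theorem setIntegral_cylinder_sq_le {M c B : ℝ} {f : ℝ → ℝ} (hL : 0 < L) (hM : 0 ≤ M)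
    (hB : 0 ≤ B)
    (hint : IntegrableOn (fun p : EuclideanSpace ℝ (Fin (n + 1)) × _ => f ‖p.1 - p.2‖)
      (Cylinder (n + 1) L δ ×ˢ Cylinder (n + 1) L δ) (volume.prod volume))
    (hfB : ∀ s, 0 ≤ s → f s ≤ c + B) (hfc : ∀ s, M < s → f s ≤ c) :
    ∫ p in Cylinder (n + 1) L δ ×ˢ Cylinder (n + 1) L δ, f ‖p.1 - p.2‖ ∂(volume.prod volume) ≤
      (c + B * M / L) * volume.real (Cylinder (n + 1) L δ) ^ 2 := by
  have hZ := measurableSet_cylinder n L δ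
  have hZZ : (volume.prod volume) (Cylinder (n + 1) L δ ×ˢ Cylinder (n + 1) L δ) ≠ ∞ := by
    rw [Measure.prod_prod]
    exact ENNReal.mul_ne_top (volume_cylinder_ne_top n L δ) (volume_cylinder_ne_top n L δ)
  calc _ ≤ c * (volume.prod volume).real (Cylinder (n + 1) L δ ×ˢ Cylinder (n + 1) L δ) +
        B * (volume.prod volume).real
          (Cylinder (n + 1) L δ ×ˢ Cylinder (n + 1) L δ ∩ coordNearDiagonal 0 M) :=
        setIntegral_le_add_mul_measureReal_inter (hZ.prod hZ) hZZ
          (measurableSet_coordNearDiagonal 0 M) hint (fun p _ => hfB _ (norm_nonneg _))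
          fun p _ hp => hfc _ (lt_norm_sub_of_notMem_coordNearDiagonal hp)
    _ ≤ c * volume.real (Cylinder (n + 1) L δ) ^ 2 +
        B * (M / L * volume.real (Cylinder (n + 1) L δ) ^ 2) := by
        rw [measureReal_prod_prod, ← sq]
        gcongr
        exact measureReal_cylinder_sq_inter_coordNearDiagonal_le hL hM
    _ = (c + B * M / L) * volume.real (Cylinder (n + 1) L δ) ^ 2 := by ring

end Cylinder

theorem abs_one_div_sq_mul_sub_one_le {V I ε : ℝ} (hV : 0 < V) (hlow : V ^ 2 ≤ I)
    (hup : I ≤ (1 + ε) * V ^ 2) : |1 / V ^ 2 * I - 1| ≤ ε := by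
  have hV2 : 0 < V ^ 2 := by positivity
  rw [one_div_mul_eq_div]
  have h1 : 1 ≤ I / V ^ 2 := (one_le_div hV2).mpr hlow
  have h2 : I / V ^ 2 ≤ 1 + ε := (div_le_iff₀ hV2).mpr hup
  exact abs_le.mpr ⟨by linarith, by linarith⟩

theorem cylinder_double_average_tendsto_one_uniformly_general
    {d : ℕ} [NeZero d]
    (h : ℝ → ℝ) (hmono : AntitoneOn h (Set.Ici 0))
    (hge1 : ∀ s : ℝ, 0 ≤ s → 1 ≤ h s)
    (hlim : Tendsto h atTop (𝓝 1)) :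
    ∀ ε : ℝ, 0 < ε → ∃ L₀ : ℝ, ∀ L ≥ L₀, ∀ δ : ℝ, 0 < δ →
      |(1 / (volume (Cylinder d L δ)).toReal ^ 2) *
          (∫ p in Cylinder d L δ ×ˢ Cylinder d L δ, h ‖p.1 - p.2‖
            ∂((volume : Measure (EuclideanSpace ℝ (Fin d))).prod volume)) - 1| ≤ ε := by
  intro ε hε
  obtain ⟨n, rfl⟩ : ∃ n, d = n + 1 := Nat.exists_eq_succ_of_ne_zero (NeZero.ne d)
  obtain ⟨M, hM⟩ := eventually_atTop.mp ((eventually_ge_atTop 0).and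
    (hlim.eventually (eventually_le_nhds (by linarith : (1 : ℝ) < 1 + ε / 2))))
  set B := h 0 - 1
  have hB : 0 ≤ B := sub_nonneg.mpr (hge1 0 le_rfl)
  have hM0 : 0 ≤ M := (hM M le_rfl).1
  refine ⟨2 * B * M / ε + 1, fun L hL δ hδ => ?_⟩
  have hL0 : 0 < L := by linarith [show 0 ≤ 2 * B * M / ε by positivity]
  have hBML : B * M / L ≤ ε / 2 := by
    rw [div_le_iff₀ hL0]
    linarith [(div_le_iff₀ hε).mp (show 2 * B * M / ε ≤ L by linarith)]
  have hint := integrableOn_prod_comp_norm_sub (volume_cylinder_ne_top n L δ) hmono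
    fun s hs => zero_le_one.trans (hge1 s hs)
  refine abs_one_div_sq_mul_sub_one_le (volume_real_cylinder_pos hL0 hδ)
    (measureReal_sq_le_setIntegral_prod (measurableSet_cylinder n L δ)
      (volume_cylinder_ne_top n L δ) hge1 hint) ?_
  calc _ ≤ (1 + ε / 2 + B * M / L) * volume.real (Cylinder (n + 1) L δ) ^ 2 :=
        setIntegral_cylinder_sq_le hL0 hM0 hB hint
          (fun s hs => by linarith [hmono Set.self_mem_Ici (Set.mem_Ici.mpr hs) hs])
          fun s hs => (hM s hs.le).2
    _ ≤ (1 + ε) * volume.real (Cylinder (n + 1) L δ) ^ 2 :=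
        mul_le_mul_of_nonneg_right (by linarith) (sq_nonneg _)

/-- If `h ≥ 1` is decreasing with `h(s) → 1` as `s → ∞` and `h(s) ≤ C s^μ` near `0`
with `μ > −1`, then the normalized double integral of `h(|x−y|)` over the square of
the cylinder `Z(2L,δ)` converges to `1` as `L → ∞`, uniformly in `δ > 0`. -/
theorem cylinder_double_average_tendsto_one_uniformly
    {d : ℕ} [NeZero d] (hd : 2 ≤ d)
    (h : ℝ → ℝ) (hmono : AntitoneOn h (Set.Ici 0))
    (hge1 : ∀ s : ℝ, 0 ≤ s → 1 ≤ h s)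
    (hlim : Tendsto h atTop (𝓝 1))
    (C μ : ℝ) (hC : 0 < C) (hμ : (-1 : ℝ) < μ)
    (a : ℝ) (ha : 0 < a) (hbound : ∀ s ∈ Set.Ioo (0 : ℝ) a, h s ≤ C * s ^ μ) :
    ∀ ε : ℝ, 0 < ε → ∃ L₀ : ℝ, ∀ L ≥ L₀, ∀ δ : ℝ, 0 < δ →
      |(1 / (volume (Cylinder d L δ)).toReal ^ 2) *
          (∫ p in Cylinder d L δ ×ˢ Cylinder d L δ, h ‖p.1 - p.2‖
            ∂((volume : Measure (EuclideanSpace ℝ (Fin d))).prod volume)) - 1| ≤ ε :=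
  cylinder_double_average_tendsto_one_uniformly_general h hmono hge1 hlim
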